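/- The Jacobian of the change of variables (x,y) ↦ (θ_ε, γ_ε) equals ½ g'(ψ_ε), i.e. ∂_x θ_ε · ∂_y γ_ε − ∂_y θ_ε · ∂_x γ_ε = (1-ε²)/(cosh y + ε cos x)² > 0, where ∂_x θ_ε = γ_{ε,y}/(1-γ_ε²) and ∂_y θ_ε = -γ_{ε,x}/(1-γ_ε²). -/

import Mathlib

noncomputable section

/-- The denominator `cosh y + ε cos x`. -/
def KSden (ε x y : ℝ) : ℝ := Real.cosh y + ε * Real.cos x

/-- The weight `g'(ψ_ε) = 2e^{-2ψ_ε} = 2(1-ε²)/(cosh y + ε cos x)²`. -/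
def KSgp (ε x y : ℝ) : ℝ := 2 * (1 - ε ^ 2) / (KSden ε x y) ^ 2

/-- `η_ε = √(1-ε²) sin x/(cosh y + ε cos x)`. -/
def KSeta (ε x y : ℝ) : ℝ := Real.sqrt (1 - ε ^ 2) * Real.sin x / KSden ε x y

/-- `γ_ε = √(1-ε²) sinh y/(cosh y + ε cos x)`. -/
def KSgam (ε x y : ℝ) : ℝ := Real.sqrt (1 - ε ^ 2) * Real.sinh y / KSden ε x y

/-- `ξ_ε = (ε cosh y + cos x)/(cosh y + ε cos x)`. -/
def KSxi (ε x y : ℝ) : ℝ := (ε * Real.cosh y + Real.cos x) / KSden ε x y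

/-- Partial derivative in the first variable. -/
def pdx (f : ℝ → ℝ → ℝ) (x y : ℝ) : ℝ := deriv (fun t => f t y) x

/-- Partial derivative in the second variable. -/
def pdy (f : ℝ → ℝ → ℝ) (x y : ℝ) : ℝ := deriv (fun t => f x t) y

/-- The Laplacian `Δf = ∂²f/∂x² + ∂²f/∂y²`. -/
def KSlap (f : ℝ → ℝ → ℝ) (x y : ℝ) : ℝ := pdx (pdx f) x y + pdy (pdy f) x y

end

/-! The Jacobian is `(|∇γ_ε|²)/(1-γ_ε²)`, and a direct computation gives
`|∇γ_ε|² = (1-ε²)(1-γ_ε²)/(cosh y + ε cos x)²`: the factor `1-γ_ε²` cancels. -/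

open Real

section KSgam

variable (ε x y : ℝ)

lemma KSden_pos (hε : |ε| < 1) : 0 < KSden ε x y := by
  have hcos : |ε * cos x| ≤ |ε| := by
    rw [abs_mul]; exact mul_le_of_le_one_right (abs_nonneg ε) (abs_cos_le_one x)
  have := neg_abs_le (ε * cos x)
  unfold KSden; linarith [one_le_cosh y]

lemma hasDerivAt_KSden_left : HasDerivAt (fun t => KSden ε t y) (-(ε * sin x)) x := by
  simpa [KSden] using ((hasDerivAt_cos x).const_mul ε).const_add (cosh y)

lemma hasDerivAt_KSden_right : HasDerivAt (fun t => KSden ε x t) (sinh y) y :=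
  (hasDerivAt_cosh y).add_const (ε * cos x)

lemma pdx_KSgam (hd : KSden ε x y ≠ 0) :
    pdx (KSgam ε) x y = √(1 - ε ^ 2) * (ε * sinh y * sin x) / KSden ε x y ^ 2 := by
  have h := (hasDerivAt_const x (√(1 - ε ^ 2) * sinh y)).fun_div
    (hasDerivAt_KSden_left ε x y) hd
  rw [pdx, show (fun t => KSgam ε t y) = fun t => √(1 - ε ^ 2) * sinh y / KSden ε t y from rfl,
    h.deriv]
  ring

lemma pdy_KSgam (hd : KSden ε x y ≠ 0) :
    pdy (KSgam ε) x y = √(1 - ε ^ 2) * (1 + ε * cosh y * cos x) / KSden ε x y ^ 2 := by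
  have h := ((hasDerivAt_sinh y).const_mul √(1 - ε ^ 2)).fun_div
    (hasDerivAt_KSden_right ε x y) hd
  rw [pdy, show (fun t => KSgam ε x t) = fun t => √(1 - ε ^ 2) * sinh t / KSden ε x t from rfl,
    h.deriv]
  congr 1
  unfold KSden
  linear_combination √(1 - ε ^ 2) * cosh_sq_sub_sinh_sq y

lemma KSden_sq_sub_mul_sinh_sq :
    KSden ε x y ^ 2 - (1 - ε ^ 2) * sinh y ^ 2
      = (1 + ε * cosh y * cos x) ^ 2 + (ε * sinh y * sin x) ^ 2 := by
  unfold KSden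
  linear_combination (1 - ε ^ 2 * cos x ^ 2) * cosh_sq_sub_sinh_sq y
    - ε ^ 2 * sinh y ^ 2 * sin_sq_add_cos_sq x

lemma pdx_KSgam_sq_add_pdy_KSgam_sq (hε : ε ^ 2 ≤ 1) (hd : KSden ε x y ≠ 0) :
    pdx (KSgam ε) x y ^ 2 + pdy (KSgam ε) x y ^ 2
      = (1 - ε ^ 2) * (1 - KSgam ε x y ^ 2) / KSden ε x y ^ 2 := by
  have hc : √(1 - ε ^ 2) ^ 2 = 1 - ε ^ 2 := sq_sqrt (by linarith)
  rw [pdx_KSgam ε x y hd, pdy_KSgam ε x y hd, KSgam]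
  field_simp
  rw [hc]
  linear_combination -(1 - ε ^ 2) * KSden_sq_sub_mul_sinh_sq ε x y

end KSgam

/-- The Jacobian of the change of variables `(x,y) ↦ (θ_ε, γ_ε)` equals `½ g'(ψ_ε)`:
with `∂_x θ_ε = γ_{ε,y}/(1-γ_ε²)` and `∂_y θ_ε = -γ_{ε,x}/(1-γ_ε²)` (on the region
where `γ_ε² < 1`), one has
`∂_x θ_ε · ∂_y γ_ε − ∂_y θ_ε · ∂_x γ_ε = (1-ε²)/(cosh y + ε cos x)² > 0`. -/
theorem stmt6 (ε : ℝ) (hε : ε ∈ Set.Ico (0 : ℝ) 1) (x y : ℝ)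
    (h : (KSgam ε x y) ^ 2 < 1) :
    (pdy (KSgam ε) x y / (1 - (KSgam ε x y) ^ 2)) * pdy (KSgam ε) x y
        - (-(pdx (KSgam ε) x y) / (1 - (KSgam ε x y) ^ 2)) * pdx (KSgam ε) x y
      = (1 - ε ^ 2) / (KSden ε x y) ^ 2 ∧
    0 < (1 - ε ^ 2) / (KSden ε x y) ^ 2 := by
  obtain ⟨hε0, hε1⟩ := hε
  have hd := KSden_pos ε x y (abs_lt.mpr ⟨by linarith, hε1⟩)
  have hgrad := pdx_KSgam_sq_add_pdy_KSgam_sq ε x y (by nlinarith) hd.ne'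
  have hγ : 1 - KSgam ε x y ^ 2 ≠ 0 := by linarith
  refine ⟨?_, div_pos (by nlinarith) (by positivity)⟩
  calc _ = (pdx (KSgam ε) x y ^ 2 + pdy (KSgam ε) x y ^ 2) / (1 - KSgam ε x y ^ 2) := by ring
    _ = _ := by rw [hgrad]; field_simp
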